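/- For the (2m+1)-dimensional Heisenberg Lie algebra H(m) over the finite field F_q (q ≥ 2), one has d(H(m)) = (q^{2m}+q-1)/q^{2m+1}, and consequently lim_{m→∞} d(H(m)) = 1/q. -/

import Mathlib

/-- Commutativity degree of a (finite) Lie ring. -/
noncomputable def commDeg (L : Type*) [LieRing L] : ℚ :=
  (Nat.card {p : L × L // ⁅p.1, p.2⁆ = 0} : ℚ) / (Nat.card L : ℚ) ^ 2

/-! ### The Heisenberg Lie algebra `H(m)` of dimension `2m+1` -/

/-- The Heisenberg Lie algebra of dimension `2m+1`: carrier `(Fin m → F) × (Fin m → F) × F`,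
with basis `x_1, …, x_m, y_1, …, y_m, z` and the only nonzero brackets `⁅x_i, y_i⁆ = z`. -/
def Heisenberg (F : Type*) (m : ℕ) : Type _ := (Fin m → F) × (Fin m → F) × F

namespace Heisenberg
variable {F : Type*} [Field F] {m : ℕ}

instance : AddCommGroup (Heisenberg F m) :=
  inferInstanceAs (AddCommGroup ((Fin m → F) × (Fin m → F) × F))
instance : Module F (Heisenberg F m) :=
  inferInstanceAs (Module F ((Fin m → F) × (Fin m → F) × F))

/-- The Lie bracket on the Heisenberg algebra:
`⁅(x, y, z), (x', y', z')⁆ = (0, 0, ∑ i, (x i * y' i - x' i * y i))`. -/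
def br (a b : Heisenberg F m) : Heisenberg F m :=
  (0, 0, ∑ i, (a.1 i * b.2.1 i - b.1 i * a.2.1 i))

instance : LieRing (Heisenberg F m) where
  bracket := br
  add_lie x y z := by
    show ((0, 0, ∑ i, ((x.1 i + y.1 i) * z.2.1 i - z.1 i * (x.2.1 i + y.2.1 i))) :
        (Fin m → F) × (Fin m → F) × F) =
      (0 + 0, 0 + 0, (∑ i, (x.1 i * z.2.1 i - z.1 i * x.2.1 i)) +
        ∑ i, (y.1 i * z.2.1 i - z.1 i * y.2.1 i))
    rw [← Finset.sum_add_distrib]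
    refine Prod.ext (by simp) (Prod.ext (by simp) ?_)
    dsimp only
    exact Finset.sum_congr rfl fun i _ => by ring
  lie_add x y z := by
    show ((0, 0, ∑ i, (x.1 i * (y.2.1 i + z.2.1 i) - (y.1 i + z.1 i) * x.2.1 i)) :
        (Fin m → F) × (Fin m → F) × F) =
      (0 + 0, 0 + 0, (∑ i, (x.1 i * y.2.1 i - y.1 i * x.2.1 i)) +
        ∑ i, (x.1 i * z.2.1 i - z.1 i * x.2.1 i))
    rw [← Finset.sum_add_distrib]
    refine Prod.ext (by simp) (Prod.ext (by simp) ?_)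
    dsimp only
    exact Finset.sum_congr rfl fun i _ => by ring
  lie_self x := by
    show ((0, 0, ∑ i, (x.1 i * x.2.1 i - x.1 i * x.2.1 i)) :
        (Fin m → F) × (Fin m → F) × F) = (0, 0, 0)
    simp
  leibniz_lie x y z := by
    show br x (br y z) = br (br x y) z + br y (br x z)
    unfold br
    refine Prod.ext (by simp; exact (add_zero (0 : Fin m → F)).symm)
      (Prod.ext (by simp; exact (add_zero (0 : Fin m → F)).symm) ?_)
    dsimp only
    simp
    exact (add_zero (0 : F)).symm

instance : LieAlgebra F (Heisenberg F m) :=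
  { (inferInstance : Module F (Heisenberg F m)) with
    lie_smul := fun t x y => by
      show ((0, 0, ∑ i, (x.1 i * (t • y.2.1) i - (t • y.1) i * x.2.1 i)) :
          (Fin m → F) × (Fin m → F) × F) =
        (t • (0 : Fin m → F), t • (0 : Fin m → F), t • ∑ i, (x.1 i * y.2.1 i - y.1 i * x.2.1 i))
      refine Prod.ext (by simp) (Prod.ext (by simp) ?_)
      dsimp only
      rw [Finset.smul_sum]
      refine Finset.sum_congr rfl fun i _ => ?_
      show x.1 i * (t * y.2.1 i) - t * y.1 i * x.2.1 i = t * (x.1 i * y.2.1 i - y.1 i * x.2.1 i)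
      ring }

instance [Fintype F] : Fintype (Heisenberg F m) :=
  inferInstanceAs (Fintype ((Fin m → F) × (Fin m → F) × F))

end Heisenberg


section Aux
variable {F : Type*} [Field F] {m : ℕ}

def phiL (u : (Fin m → F) × (Fin m → F)) : ((Fin m → F) × (Fin m → F)) →ₗ[F] F where
  toFun v := ∑ i, (u.1 i * v.2 i - v.1 i * u.2 i)
  map_add' a b := by
    rw [← Finset.sum_add_distrib]
    refine Finset.sum_congr rfl fun i _ => ?_
    simp only [Prod.fst_add, Prod.snd_add, Pi.add_apply]
    ring
  map_smul' t a := by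
    simp only [RingHom.id_apply]
    rw [Finset.smul_sum]
    refine Finset.sum_congr rfl fun i _ => ?_
    simp only [Prod.smul_fst, Prod.smul_snd, Pi.smul_apply, smul_eq_mul]
    ring

lemma phiL_apply (u v : (Fin m → F) × (Fin m → F)) :
    phiL u v = ∑ i, (u.1 i * v.2 i - v.1 i * u.2 i) := rfl

lemma phiL_surj (u : (Fin m → F) × (Fin m → F)) (hu : u ≠ 0) :
    Function.Surjective (phiL u) := by
  have h : ∃ v, phiL u v ≠ 0 := by
    have : u.1 ≠ 0 ∨ u.2 ≠ 0 := by
      by_contra h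
      push_neg at h
      exact hu (Prod.ext h.1 h.2)
    rcases this with h | h
    · obtain ⟨j, hj⟩ := Function.ne_iff.1 h
      refine ⟨(0, Pi.single j 1), ?_⟩
      rw [phiL_apply]
      have : ∀ i ∈ Finset.univ, i ≠ j →
          (u.1 i * (Pi.single j 1 : Fin m → F) i - (0 : Fin m → F) i * u.2 i) = 0 := by
        intro i _ hij; simp [Pi.single_apply, hij]
      rw [Finset.sum_eq_single_of_mem j (Finset.mem_univ j) this]
      simpa using hj
    · obtain ⟨j, hj⟩ := Function.ne_iff.1 h
      refine ⟨(Pi.single j 1, 0), ?_⟩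
      rw [phiL_apply]
      have : ∀ i ∈ Finset.univ, i ≠ j →
          (u.1 i * (0 : Fin m → F) i - (Pi.single j 1 : Fin m → F) i * u.2 i) = 0 := by
        intro i _ hij; simp [Pi.single_apply, hij]
      rw [Finset.sum_eq_single_of_mem j (Finset.mem_univ j) this]
      simpa using hj
  obtain ⟨v, hv⟩ := h
  intro c
  exact ⟨(c / phiL u v) • v, by rw [map_smul, smul_eq_mul, div_mul_cancel₀ _ hv]⟩

lemma card_ker [Fintype F] (u : (Fin m → F) × (Fin m → F)) (hu : u ≠ 0) :
    Fintype.card F * Nat.card {v : (Fin m → F) × (Fin m → F) // phiL u v = 0}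
      = Fintype.card F ^ (2 * m) := by
  have h1 := Submodule.card_eq_card_quotient_mul_card (LinearMap.ker (phiL u))
  have e : (((Fin m → F) × (Fin m → F)) ⧸ LinearMap.ker (phiL u)) ≃ₗ[F] F :=
    LinearMap.quotKerEquivOfSurjective _ (phiL_surj u hu)
  rw [Nat.card_congr e.toEquiv] at h1
  have e2 : {v : (Fin m → F) × (Fin m → F) // phiL u v = 0} ≃ LinearMap.ker (phiL u) :=
    Equiv.subtypeEquivRight (fun v => (LinearMap.mem_ker).symm)
  rw [Nat.card_congr e2, mul_comm, ← Nat.card_eq_fintype_card (α := F), ← h1,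
    Nat.card_eq_fintype_card]
  simp [Fintype.card_prod, two_mul, pow_add]

end Aux

section AuxMain
variable {F : Type*} [Field F] {m : ℕ}

lemma phiL_zero (v : (Fin m → F) × (Fin m → F)) : phiL 0 v = 0 := by
  rw [phiL_apply]; simp

lemma bracket_eq_zero_iff (a b : Heisenberg F m) :
    ⁅a, b⁆ = 0 ↔ phiL (a.1, a.2.1) (b.1, b.2.1) = 0 := by
  show Heisenberg.br a b = 0 ↔ _
  rw [phiL_apply]
  unfold Heisenberg.br
  constructor
  · intro h; exact congrArg (fun p => p.2.2) h
  · intro h; exact Prod.ext rfl (Prod.ext rfl h)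

def heisEquiv : {p : Heisenberg F m × Heisenberg F m // ⁅p.1, p.2⁆ = 0} ≃
    {w : ((Fin m → F) × (Fin m → F)) × ((Fin m → F) × (Fin m → F)) // phiL w.1 w.2 = 0}
      × (F × F) where
  toFun p := (⟨((p.1.1.1, p.1.1.2.1), (p.1.2.1, p.1.2.2.1)),
      (bracket_eq_zero_iff _ _).1 p.2⟩, (p.1.1.2.2, p.1.2.2.2))
  invFun w := ⟨((w.1.1.1.1, w.1.1.1.2, w.2.1), (w.1.1.2.1, w.1.1.2.2, w.2.2)),
    (bracket_eq_zero_iff _ _).2 w.1.2⟩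
  left_inv p := rfl
  right_inv w := rfl

lemma card_pairs [Fintype F] (hm : 1 ≤ m) :
    Nat.card {p : Heisenberg F m × Heisenberg F m // ⁅p.1, p.2⁆ = 0} =
      (Fintype.card F ^ (2 * m) + (Fintype.card F ^ (2 * m) - 1) * Fintype.card F ^ (2 * m - 1))
        * Fintype.card F ^ 2 := by
  classical
  set q := Fintype.card F with hq
  have hq2 : 2 ≤ q := Fintype.one_lt_card
  rw [Nat.card_congr (heisEquiv (F := F) (m := m)), Nat.card_prod, Nat.card_prod]
  have hV : Nat.card ((Fin m → F) × (Fin m → F)) = q ^ (2 * m) := by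
    simp [Nat.card_eq_fintype_card, two_mul, pow_add]; rfl
  -- split the subtype over the first component
  have e : {w : ((Fin m → F) × (Fin m → F)) × ((Fin m → F) × (Fin m → F)) //
      phiL w.1 w.2 = 0} ≃ Σ u : (Fin m → F) × (Fin m → F), {v // phiL u v = 0} :=
    Equiv.subtypeProdEquivSigmaSubtype (fun u v => phiL u v = 0)
  rw [Nat.card_congr e, Nat.card_eq_fintype_card, Fintype.card_sigma]
  have hker : ∀ u : (Fin m → F) × (Fin m → F), u ≠ 0 →
      Fintype.card {v // phiL u v = 0} = q ^ (2 * m - 1) := by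
    intro u hu
    have := card_ker u hu
    rw [Nat.card_eq_fintype_card] at this
    have hpow : q ^ (2 * m) = q * q ^ (2 * m - 1) := by
      rw [← pow_succ']
      congr 1
      omega
    refine Nat.eq_of_mul_eq_mul_left (show 0 < q by omega) ?_
    rw [← hpow]
    exact this
  have h0 : Fintype.card {v // phiL (0 : (Fin m → F) × (Fin m → F)) v = 0}
      = q ^ (2 * m) := by
    rw [Fintype.card_congr (Equiv.subtypeUnivEquiv fun v => phiL_zero v),
      ← Nat.card_eq_fintype_card, hV]
  rw [← Finset.add_sum_erase _ _ (Finset.mem_univ (0 : (Fin m → F) × (Fin m → F))), h0,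
    Finset.sum_congr rfl (fun u hu => hker u (Finset.ne_of_mem_erase hu)),
    Finset.sum_const, Finset.card_erase_of_mem (Finset.mem_univ _)]
  have : Fintype.card ((Fin m → F) × (Fin m → F)) = q ^ (2 * m) := by
    rw [← Nat.card_eq_fintype_card]; exact hV
  rw [Finset.card_univ, this, Nat.card_eq_fintype_card, ← hq, smul_eq_mul, sq]
end AuxMain

/-- The Heisenberg Lie algebra `H(m)` over the finite field `F_q` (`q ≥ 2`)
has commutativity degree `(q^(2m) + q - 1)/q^(2m+1)`, and consequently
`d(H(m)) → 1/q` as `m → ∞`. -/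
theorem stmt16 (q : ℕ) (hq : 2 ≤ q) (F : Type) [Field F] [Fintype F]
    (hF : Fintype.card F = q) :
    (∀ m : ℕ, 1 ≤ m →
      commDeg (Heisenberg F m) = ((q : ℚ) ^ (2 * m) + q - 1) / (q : ℚ) ^ (2 * m + 1)) ∧
    Filter.Tendsto (fun m => (commDeg (Heisenberg F m) : ℝ)) Filter.atTop
      (nhds (1 / (q : ℝ))) := by
  have hq0 : (q : ℚ) ≠ 0 := by positivity
  have part1 : ∀ m : ℕ, 1 ≤ m →
      commDeg (Heisenberg F m) = ((q : ℚ) ^ (2 * m) + q - 1) / (q : ℚ) ^ (2 * m + 1) := by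
    intro m hm
    obtain ⟨n, rfl⟩ : ∃ n, m = n + 1 := ⟨m - 1, by omega⟩
    unfold commDeg
    rw [card_pairs (by omega), hF]
    have hH : Nat.card (Heisenberg F (n + 1)) = q ^ (2 * (n + 1) + 1) := by
      rw [Nat.card_eq_fintype_card]
      have hcard : Fintype.card (Heisenberg F (n + 1)) =
          Fintype.card ((Fin (n + 1) → F) × (Fin (n + 1) → F) × F) := rfl
      rw [hcard]
      simp only [Fintype.card_prod, Fintype.card_fun, Fintype.card_fin, hF]
      ring
    rw [hH, show 2 * (n + 1) = 2 * n + 2 by ring, show 2 * n + 2 - 1 = 2 * n + 1 by omega]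
    have hle : (1 : ℕ) ≤ q ^ (2 * n + 2) := Nat.one_le_pow _ _ (by omega)
    push_cast [Nat.cast_sub hle]
    rw [div_eq_div_iff (by positivity) (by positivity)]
    ring
  refine ⟨part1, ?_⟩
  have hq2 : (2 : ℝ) ≤ q := by exact_mod_cast hq
  have hq0' : (q : ℝ) ≠ 0 := by positivity
  have key : ∀ m : ℕ, 1 ≤ m → (commDeg (Heisenberg F m) : ℝ) =
      1 / (q : ℝ) + ((q : ℝ) - 1) / q * (1 / (q : ℝ) ^ 2) ^ m := by
    intro m hm
    rw [part1 m hm]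
    push_cast
    rw [one_div_pow, ← pow_mul]
    field_simp
    ring
  have lim : Filter.Tendsto (fun m : ℕ =>
      1 / (q : ℝ) + ((q : ℝ) - 1) / q * (1 / (q : ℝ) ^ 2) ^ m) Filter.atTop
      (nhds (1 / (q : ℝ))) := by
    have h1 : Filter.Tendsto (fun m : ℕ => (1 / (q : ℝ) ^ 2) ^ m) Filter.atTop (nhds 0) := by
      apply tendsto_pow_atTop_nhds_zero_of_lt_one (by positivity)
      rw [div_lt_one (by positivity)]
      nlinarith
    have h2 := (h1.const_mul (((q : ℝ) - 1) / q)).const_add (1 / (q : ℝ))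
    simpa using h2
  exact lim.congr' (Filter.eventuallyEq_of_mem (Filter.mem_atTop 1)
    fun m hm => (key m hm).symm)
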